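/- arXiv:2104.00090 — 3 statements merged into one kernel-verified Lean document; each statement's English description precedes it below -/
import Mathlib

section
/- Suppose the fine functions form a partition of unity, Σ_{j ∈ J} B j x = 1 for all x ∈ X, and the refinement coefficients have unit column sums, Σ_{i ∈ I} h i j = 1 for every j ∈ J. Then for every active set A ⊆ J, the truncated coarse functions together with the active fine functions form a partition of unity: for all x ∈ X, Σ_{i ∈ I} trun C i x + Σ_{j ∈ A} B j x = 1. -/
open Finset

theorem Finset.sum_sum_mul_eq_sum_of_sum_eq_one {ι κ R : Type*} [NonAssocSemiring R]
    (t : Finset ι) (s : Finset κ) (h : ι → κ → R) (b : κ → R)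
    (hcol : ∀ j ∈ s, ∑ i ∈ t, h i j = 1) :
    ∑ i ∈ t, ∑ j ∈ s, h i j * b j = ∑ j ∈ s, b j := by
  rw [sum_comm]
  refine sum_congr rfl fun j hj => ?_
  rw [← sum_mul, hcol j hj, one_mul]

/-- **Truncation preserves partition of unity.**
Fine functions `B : J → X → ℝ` form a partition of unity and the refinement
coefficients `h : I → J → ℝ` have unit column sums.  The coarse functions are
`C i x = ∑ j, h i j * B j x` and, for an active set `A ⊆ J`, the truncated
coarse functions are `trun C i x = ∑ j ∈ Aᶜ, h i j * B j x`.  Then the truncated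
coarse functions together with the active fine functions form a partition of unity. -/
theorem truncation_partition_of_unity
    {X I J : Type*} [Fintype I] [Fintype J] [DecidableEq J]
    (B : J → X → ℝ) (h : I → J → ℝ)
    (hPU : ∀ x : X, ∑ j : J, B j x = 1)
    (hcol : ∀ j : J, ∑ i : I, h i j = 1)
    (A : Finset J) (x : X) :
    ∑ i : I, (∑ j ∈ Aᶜ, h i j * B j x) + ∑ j ∈ A, B j x = 1 := by
  rw [sum_sum_mul_eq_sum_of_sum_eq_one univ Aᶜ h (B · x) fun j _ => hcol j,
    sum_compl_add_sum, hPU x]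
end

section
/- Under the two-level THU-spline setup, the consistent-refinement identity holds: assuming the selection hypotheses — (i) for i ∈ Nf⁺ and k ∈ Faℓ with hf k i ≠ 0, k ∈ Afℓ; (ii) for i ∈ Nf⁺, k ∈ Fpℓ with hf k i ≠ 0 and m ∈ Vℓ with dℓ m k ≠ 0, m ∈ Avℓ; (iii) for i ∈ Nv⁺ and m ∈ Vℓ with hv m i ≠ 0, m ∈ Avℓ — one has, for every x ∈ X, S x = Σ_{i ∈ Af⁺} (B i x) • Q⁺ i + Σ_{j ∈ Av⁺} (trunD V j x) • P⁺ j + Σ_{k ∈ Afℓ} (trunH B k x) • Q k + Σ_{m ∈ Avℓ} (trunHD V m x) • P m. That is, the surface patch admits a representation in terms of H-active splines only, with coarse truncated F-splines trunH and doubly truncated V-splines trunHD (Eq. (41) of the paper). -/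
/-!
Split the fine sums into their H-active and H-passive parts. After exchanging the order of
summation, each H-passive fine term becomes a combination of coarse control points whose
coefficients are exactly `trunH` and the two parts of `trunHD`; the selection hypotheses say that
these coefficients vanish at every H-passive coarse index, so the coarse sums may be restricted to
the H-active ones.
-/

open Finset

section Exchange

variable {R M ι κ : Type*} [CommSemiring R] [AddCommMonoid M] [Module R M]

theorem Finset.sum_smul_sum_smul_comm (s : Finset ι) (u : Finset κ) (a : ι → R)
    (c : κ → ι → R) (v : κ → M) :
    ∑ i ∈ s, a i • ∑ k ∈ u, c k i • v k = ∑ k ∈ u, (∑ i ∈ s, c k i * a i) • v k := by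
  simp_rw [smul_sum, smul_smul, sum_smul, mul_comm (a _)]
  exact sum_comm

theorem Finset.sum_smul_sum_smul_comm_of_support (s : Finset ι) {t u : Finset κ} (htu : t ⊆ u)
    (a : ι → R) (c : κ → ι → R) (v : κ → M) (hsupp : ∀ i ∈ s, ∀ k ∈ u, c k i ≠ 0 → k ∈ t) :
    ∑ i ∈ s, a i • ∑ k ∈ u, c k i • v k = ∑ k ∈ t, (∑ i ∈ s, c k i * a i) • v k := by
  rw [sum_smul_sum_smul_comm]
  refine (sum_subset htu fun k hku hkt => ?_).symm
  have hc : ∀ i ∈ s, c k i = 0 := fun i hi => not_not.mp fun h => hkt (hsupp i hi k hku h)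
  rw [sum_eq_zero fun i hi => by rw [hc i hi, zero_mul], zero_smul]

end Exchange

theorem Finset.sum_mul_sum_mul_comm {R ι κ : Type*} [NonUnitalSemiring R] (s : Finset ι)
    (t : Finset κ) (c : ι → R) (d : ι → κ → R) (b : κ → R) :
    ∑ j ∈ s, c j * ∑ i ∈ t, d j i * b i = ∑ i ∈ t, (∑ j ∈ s, c j * d j i) * b i := by
  simp_rw [mul_sum, sum_mul, mul_assoc]
  exact sum_comm

/-- **Consistent refinement of THU-splines (two levels, Eq. (41) of the paper).**

Two-level setup: `Fp` are the fine F-points with D-active subset `Fa` (D-passive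
`Faᶜ`), `Vp` the fine D-active V-points, `Fl` the coarse F-points with D-active
subset `Fal` (D-passive `Falᶜ`), `Vl` the coarse D-active V-points.
`B` are the fine F-splines; `dp`/`dl` the fine/coarse same-level truncation
coefficients; `hv`/`hf` the refinement coefficients; `Af ⊆ Fa` and `Av` the
H-active fine subsets (H-passive `Nf = Fa \ Af`, `Nv = Avᶜ`); `Afl ⊆ Fal` and
`Avl` the H-active coarse subsets; `P`, `Q` the coarse control points.

Fine V-splines: `trunD V j x = ∑ i ∈ Faᶜ, dp j i * B i x`.
Fine control points by refinement: `P⁺ j = ∑ k, hv k j • P k` and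
`Q⁺ i = ∑ k ∈ Fal, hf k i • Q k + ∑ k ∈ Falᶜ, hf k i • (∑ m, dl m k • P m)`.
Surface patch: `S x = ∑ i ∈ Fa, B i x • Q⁺ i + ∑ j, trunD V j x • P⁺ j`.
Coarse truncated splines: `trunH B k x = ∑ i ∈ Nf, hf k i * B i x`,
`trunHD V m x = ∑ i ∈ Nf, (∑ k ∈ Falᶜ, hf k i * dl m k) * B i x
  + ∑ i ∈ Faᶜ, (∑ k ∈ Nv, hv m k * dp k i) * B i x`.

Under the selection hypotheses (every nonzero parent of an H-passive fine spline
is H-active), the surface patch is represented by H-active splines only. -/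
theorem thuSpline_consistent_refinement
    {X E : Type*} [AddCommGroup E] [Module ℝ E]
    {Fp Vp Fl Vl : Type*}
    [Fintype Fp] [DecidableEq Fp] [Fintype Vp] [DecidableEq Vp]
    [Fintype Fl] [DecidableEq Fl] [Fintype Vl]
    (Fa : Finset Fp) (Fal : Finset Fl)
    (B : Fp → X → ℝ)
    (dp : Vp → Fp → ℝ) (dl : Vl → Fl → ℝ)
    (hv : Vl → Vp → ℝ) (hf : Fl → Fp → ℝ)
    (Af : Finset Fp) (hAf : Af ⊆ Fa)
    (Av : Finset Vp)
    (Afl : Finset Fl) (hAfl : Afl ⊆ Fal)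
    (Avl : Finset Vl)
    (P : Vl → E) (Q : Fl → E)
    (hsel1 : ∀ i ∈ Fa \ Af, ∀ k ∈ Fal, hf k i ≠ 0 → k ∈ Afl)
    (hsel2 : ∀ i ∈ Fa \ Af, ∀ k ∈ Falᶜ, hf k i ≠ 0 → ∀ m : Vl, dl m k ≠ 0 → m ∈ Avl)
    (hsel3 : ∀ i ∈ Avᶜ, ∀ m : Vl, hv m i ≠ 0 → m ∈ Avl)
    (x : X) :
    (∑ i ∈ Fa, B i x •
        (∑ k ∈ Fal, hf k i • Q k + ∑ k ∈ Falᶜ, hf k i • (∑ m : Vl, dl m k • P m))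
      + ∑ j : Vp, (∑ i ∈ Faᶜ, dp j i * B i x) • (∑ k : Vl, hv k j • P k))
    =
    (∑ i ∈ Af, B i x •
        (∑ k ∈ Fal, hf k i • Q k + ∑ k ∈ Falᶜ, hf k i • (∑ m : Vl, dl m k • P m))
      + ∑ j ∈ Av, (∑ i ∈ Faᶜ, dp j i * B i x) • (∑ k : Vl, hv k j • P k)
      + ∑ k ∈ Afl, (∑ i ∈ Fa \ Af, hf k i * B i x) • Q k
      + ∑ m ∈ Avl,
          ((∑ i ∈ Fa \ Af, (∑ k ∈ Falᶜ, hf k i * dl m k) * B i x)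
            + (∑ i ∈ Faᶜ, (∑ k ∈ Avᶜ, hv m k * dp k i) * B i x)) • P m) := by
  have hQ : ∑ i ∈ Fa \ Af, B i x • ∑ k ∈ Fal, hf k i • Q k
      = ∑ k ∈ Afl, (∑ i ∈ Fa \ Af, hf k i * B i x) • Q k :=
    sum_smul_sum_smul_comm_of_support _ hAfl _ _ _ hsel1
  have hPf : ∑ i ∈ Fa \ Af, B i x • ∑ k ∈ Falᶜ, hf k i • ∑ m : Vl, dl m k • P m
      = ∑ m ∈ Avl, (∑ i ∈ Fa \ Af, (∑ k ∈ Falᶜ, hf k i * dl m k) * B i x) • P m := by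
    simp_rw [sum_smul_sum_smul_comm Falᶜ univ, mul_comm (dl _ _)]
    refine sum_smul_sum_smul_comm_of_support _ (subset_univ _) _ _ _ fun i hi m _ hm => ?_
    obtain ⟨k, hk, hhd⟩ := exists_ne_zero_of_sum_ne_zero hm
    exact hsel2 i hi k hk (left_ne_zero_of_mul hhd) m (right_ne_zero_of_mul hhd)
  have hPv : ∑ j ∈ Avᶜ, (∑ i ∈ Faᶜ, dp j i * B i x) • ∑ k : Vl, hv k j • P k
      = ∑ m ∈ Avl, (∑ i ∈ Faᶜ, (∑ k ∈ Avᶜ, hv m k * dp k i) * B i x) • P m := by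
    rw [sum_smul_sum_smul_comm_of_support _ (subset_univ Avl) _ _ _
      fun j hj m _ => hsel3 j hj m]
    simp_rw [sum_mul_sum_mul_comm]
  rw [← sum_sdiff hAf, ← sum_add_sum_compl Av]
  simp only [smul_add, sum_add_distrib, add_smul, hQ, hPf, hPv]
  abel
end

section
/- Under the two-level THU-spline setup with E = ℝ, assume additionally: (a) the fine local D-patch basis is a partition of unity, Σ_{i ∈ Fa⁺} B i x + Σ_{j ∈ V⁺} trunD V j x = 1 for all x ∈ X; (b) unit coefficient sums Σ_{k ∈ Vℓ} hv k j = 1 for every j ∈ V⁺, Σ_{k ∈ Faℓ} hf k i + Σ_{k ∈ Fpℓ} hf k i = 1 for every i ∈ Fa⁺, and Σ_{m ∈ Vℓ} dℓ m k = 1 for every k ∈ Fpℓ; and (c) the selection hypotheses (every nonzero parent of an H-passive fine spline is H-active, as in the consistent-refinement identity). Then the THU-spline functions on the element form a partition of unity: for all x ∈ X, Σ_{i ∈ Af⁺} B i x + Σ_{j ∈ Av⁺} trunD V j x + Σ_{k ∈ Afℓ} trunH B k x + Σ_{m ∈ Avℓ} trunHD V m x = 1. -/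
/-!
Collect the coefficient of each fine spline. An H-passive fine F-spline `B i` reaches the coarse
level through its parents `k`: directly through `trunH k` when `k` is D-active, and through
`dℓ m k` into `trunHD m` when `k` is D-passive. By the selection hypotheses every parent with a
nonzero weight is H-active, so, using `∑ m, dℓ m k = 1`, the total coefficient of `B i` is
`∑ k, hf k i = 1`. Likewise each H-passive fine V-spline enters the `trunHD m` with total weight
`∑ m, hv m k = 1`. So the coarse functions reproduce exactly the H-passive fine functions, and
adding the H-active ones gives back the fine partition of unity.
-/

open Finset

section TwoLevel

variable {Fp Vp Fl Vl : Type*}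

theorem sum_trunH_add_sum_trunHD_fPart_eq_sum [Fintype Fl] [DecidableEq Fl] [Fintype Vl]
    (Nf : Finset Fp) (Fal Afl : Finset Fl) (Avl : Finset Vl)
    (b : Fp → ℝ) (dl : Vl → Fl → ℝ) (hf : Fl → Fp → ℝ) (hAfl : Afl ⊆ Fal)
    (hhf : ∀ i ∈ Nf, ∑ k ∈ Fal, hf k i + ∑ k ∈ Falᶜ, hf k i = 1)
    (hdl : ∀ k ∈ Falᶜ, ∑ m : Vl, dl m k = 1)
    (hsel1 : ∀ i ∈ Nf, ∀ k ∈ Fal, hf k i ≠ 0 → k ∈ Afl)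
    (hsel2 : ∀ i ∈ Nf, ∀ k ∈ Falᶜ, hf k i ≠ 0 → ∀ m : Vl, dl m k ≠ 0 → m ∈ Avl) :
    ∑ k ∈ Afl, ∑ i ∈ Nf, hf k i * b i
      + ∑ m ∈ Avl, ∑ i ∈ Nf, (∑ k ∈ Falᶜ, hf k i * dl m k) * b i = ∑ i ∈ Nf, b i := by
  have coeff_eq_one : ∀ i ∈ Nf,
      ∑ k ∈ Afl, hf k i + ∑ m ∈ Avl, ∑ k ∈ Falᶜ, hf k i * dl m k = 1 := by
    intro i hi
    have active : ∑ k ∈ Afl, hf k i = ∑ k ∈ Fal, hf k i :=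
      sum_subset hAfl fun k hk hkA => not_not.mp (mt (hsel1 i hi k hk) hkA)
    have passive : ∑ m ∈ Avl, ∑ k ∈ Falᶜ, hf k i * dl m k = ∑ k ∈ Falᶜ, hf k i := by
      rw [sum_comm]
      refine sum_congr rfl fun k hk => ?_
      rw [← mul_sum]
      by_cases h : hf k i = 0
      · rw [h, zero_mul]
      · rw [Fintype.sum_subset (hsel2 i hi k hk h), hdl k hk, mul_one]
    rw [active, passive, hhf i hi]
  calc _ = ∑ i ∈ Nf,
        (∑ k ∈ Afl, hf k i + ∑ m ∈ Avl, ∑ k ∈ Falᶜ, hf k i * dl m k) * b i := by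
        simp only [add_mul, sum_add_distrib, sum_mul]
        rw [sum_comm (s := Afl), sum_comm (s := Avl)]
    _ = ∑ i ∈ Nf, b i := sum_congr rfl fun i hi => by rw [coeff_eq_one i hi, one_mul]

theorem sum_trunHD_vPart_eq_sum_trunD [Fintype Vl]
    (Fpass : Finset Fp) (Nv : Finset Vp) (Avl : Finset Vl)
    (b : Fp → ℝ) (dp : Vp → Fp → ℝ) (hv : Vl → Vp → ℝ)
    (hhv : ∀ k ∈ Nv, ∑ m : Vl, hv m k = 1)
    (hsel3 : ∀ i ∈ Nv, ∀ m : Vl, hv m i ≠ 0 → m ∈ Avl) :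
    ∑ m ∈ Avl, ∑ i ∈ Fpass, (∑ k ∈ Nv, hv m k * dp k i) * b i
      = ∑ k ∈ Nv, ∑ i ∈ Fpass, dp k i * b i := by
  calc _ = ∑ m ∈ Avl, ∑ k ∈ Nv, hv m k * ∑ i ∈ Fpass, dp k i * b i := by
        refine sum_congr rfl fun m _ => ?_
        simp only [sum_mul, mul_sum, mul_assoc]
        exact sum_comm
    _ = ∑ k ∈ Nv, (∑ m ∈ Avl, hv m k) * ∑ i ∈ Fpass, dp k i * b i := by
        simp only [sum_mul]
        exact sum_comm
    _ = ∑ k ∈ Nv, ∑ i ∈ Fpass, dp k i * b i := sum_congr rfl fun k hk => by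
        rw [Fintype.sum_subset (hsel3 k hk), hhv k hk, one_mul]

end TwoLevel

/-- `Fa`, `Faᶜ` are the D-active and D-passive fine F-points, `Fal`, `Falᶜ` the coarse ones;
the H-passive fine sets are `Nf⁺ = Fa \ Af` and `Nv⁺ = Avᶜ`, and `dp` is `d⁺`. -/
theorem thuSpline_partition_of_unity
    {X : Type*}
    {Fp Vp Fl Vl : Type*}
    [Fintype Fp] [DecidableEq Fp] [Fintype Vp] [DecidableEq Vp]
    [Fintype Fl] [DecidableEq Fl] [Fintype Vl]
    (Fa : Finset Fp) (Fal : Finset Fl)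
    (B : Fp → X → ℝ)
    (dp : Vp → Fp → ℝ) (dl : Vl → Fl → ℝ)
    (hv : Vl → Vp → ℝ) (hf : Fl → Fp → ℝ)
    (Af : Finset Fp) (hAf : Af ⊆ Fa)
    (Av : Finset Vp)
    (Afl : Finset Fl) (hAfl : Afl ⊆ Fal)
    (Avl : Finset Vl)
    (hPU : ∀ x : X, ∑ i ∈ Fa, B i x + ∑ j : Vp, (∑ i ∈ Faᶜ, dp j i * B i x) = 1)
    (hhv : ∀ j : Vp, ∑ k : Vl, hv k j = 1)
    (hhf : ∀ i ∈ Fa, ∑ k ∈ Fal, hf k i + ∑ k ∈ Falᶜ, hf k i = 1)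
    (hdl : ∀ k ∈ Falᶜ, ∑ m : Vl, dl m k = 1)
    (hsel1 : ∀ i ∈ Fa \ Af, ∀ k ∈ Fal, hf k i ≠ 0 → k ∈ Afl)
    (hsel2 : ∀ i ∈ Fa \ Af, ∀ k ∈ Falᶜ, hf k i ≠ 0 → ∀ m : Vl, dl m k ≠ 0 → m ∈ Avl)
    (hsel3 : ∀ i ∈ Avᶜ, ∀ m : Vl, hv m i ≠ 0 → m ∈ Avl)
    (x : X) :
    ∑ i ∈ Af, B i x
      + ∑ j ∈ Av, (∑ i ∈ Faᶜ, dp j i * B i x)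
      + ∑ k ∈ Afl, (∑ i ∈ Fa \ Af, hf k i * B i x)
      + ∑ m ∈ Avl,
          ((∑ i ∈ Fa \ Af, (∑ k ∈ Falᶜ, hf k i * dl m k) * B i x)
            + (∑ i ∈ Faᶜ, (∑ k ∈ Avᶜ, hv m k * dp k i) * B i x)) = 1 := by
  have hF := sum_trunH_add_sum_trunHD_fPart_eq_sum (Fa \ Af) Fal Afl Avl (B · x) dl hf hAfl
    (fun i hi => hhf i (mem_sdiff.mp hi).1) hdl hsel1 hsel2
  have hV := sum_trunHD_vPart_eq_sum_trunD Faᶜ Avᶜ Avl (B · x) dp hv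
    (fun k _ => hhv k) hsel3
  rw [sum_add_distrib]
  linarith [hPU x, sum_sdiff hAf (f := (B · x)),
    sum_add_sum_compl Av fun j => ∑ i ∈ Faᶜ, dp j i * B i x]
end
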